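/- Let (V_0, (.,.), A_0) be a Riemannian Einstein model with Einstein constant s (Ric_0 = s(.,.)). Let (V_1, <.,.>, A_1) be the neutral signature model obtained by taking the imaginary part of the complex multilinear extension of A_0 on V_0 ⊗ C, with inner product the real part of the complex bilinear extension of (.,.). Then the Ricci operator rho_1 of A_1 satisfies rho_1(e) = -2s·ie and rho_1(ie) = 2s·e for e in V_0; in particular rho_1^2 = -4s^2 · id. -/

import Mathlib

noncomputable section

/-- The imaginary part of the complex multilinear extension of `A` to the
complexification, where `V × V` models `V ⊕ iV`. -/
def cxCurv {V : Type*} [AddCommGroup V] [Module ℝ V]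
    (A : V →ₗ[ℝ] V →ₗ[ℝ] V →ₗ[ℝ] V →ₗ[ℝ] ℝ) (u₁ u₂ u₃ u₄ : V × V) : ℝ :=
  (A u₁.2 u₂.1 u₃.1 u₄.1 + A u₁.1 u₂.2 u₃.1 u₄.1 + A u₁.1 u₂.1 u₃.2 u₄.1 +
      A u₁.1 u₂.1 u₃.1 u₄.2)
    - (A u₁.1 u₂.2 u₃.2 u₄.2 + A u₁.2 u₂.1 u₃.2 u₄.2 + A u₁.2 u₂.2 u₃.1 u₄.2 +
      A u₁.2 u₂.2 u₃.2 u₄.1)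

/-- The real part of the complex bilinear extension of the inner product;
a neutral signature inner product on `V × V`. -/
def cxForm {V : Type*} [AddCommGroup V] [Module ℝ V]
    (B : LinearMap.BilinForm ℝ V) (u v : V × V) : ℝ :=
  B u.1 v.1 - B u.2 v.2

/-- The Ricci tensor of `cxCurv A` computed with respect to the pseudo-orthonormal
basis `{(bₖ,0), (0,bₖ)}` of `V × V` (traces with signs). -/
def cxRicci {V : Type*} [AddCommGroup V] [Module ℝ V] {n : ℕ}
    (b : Module.Basis (Fin n) ℝ V)
    (A : V →ₗ[ℝ] V →ₗ[ℝ] V →ₗ[ℝ] V →ₗ[ℝ] ℝ) (u v : V × V) : ℝ :=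
  ∑ k, (cxCurv A u (b k, 0) (b k, 0) v - cxCurv A u (0, b k) (0, b k) v)

/-
In `cxCurv A u (b k, 0) (b k, 0) v` and `cxCurv A u (0, b k) (0, b k) v` with `u`
purely real or purely imaginary, a single term survives in each, and the two traces
combine to twice the Ricci tensor `∑ k, A e bₖ bₖ ·` of the Riemannian model, evaluated
on the other component of `v`. The Einstein condition turns this into `2s·B`, and since `B` is positive definite the form `cxForm B` is
nondegenerate, which pins down `rho₁` on real and on imaginary vectors.
-/

section Complexification

variable {V : Type*} [AddCommGroup V] [Module ℝ V]

theorem cxRicci_inl {n : ℕ} (b : Module.Basis (Fin n) ℝ V)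
    (A : V →ₗ[ℝ] V →ₗ[ℝ] V →ₗ[ℝ] V →ₗ[ℝ] ℝ) (e : V) (v : V × V) :
    cxRicci b A (e, 0) v = 2 * ∑ k, A e (b k) (b k) v.2 := by
  rw [Finset.mul_sum]
  refine Finset.sum_congr rfl fun k _ => ?_
  simp only [cxCurv, map_zero, LinearMap.zero_apply]
  ring

theorem cxRicci_inr {n : ℕ} (b : Module.Basis (Fin n) ℝ V)
    (A : V →ₗ[ℝ] V →ₗ[ℝ] V →ₗ[ℝ] V →ₗ[ℝ] ℝ) (e : V) (v : V × V) :
    cxRicci b A (0, e) v = 2 * ∑ k, A e (b k) (b k) v.1 := by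
  rw [Finset.mul_sum]
  refine Finset.sum_congr rfl fun k _ => ?_
  simp only [cxCurv, map_zero, LinearMap.zero_apply]
  ring

theorem eq_of_forall_cxForm_eq {B : LinearMap.BilinForm ℝ V}
    (hBpos : ∀ x, x ≠ 0 → 0 < B x x) {p q : V × V}
    (h : ∀ v, cxForm B p v = cxForm B q v) : p = q := by
  have eq_zero_of_apply_self : ∀ x, B x x = 0 → x = 0 := fun x hx => by
    by_contra hne
    exact (hBpos x hne).ne' hx
  have h₁ : p.1 - q.1 = 0 := by
    refine eq_zero_of_apply_self _ ?_
    have := h (p.1 - q.1, 0)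
    simp only [cxForm, map_zero, map_sub] at this
    simp only [map_sub, LinearMap.sub_apply]
    linarith
  have h₂ : p.2 - q.2 = 0 := by
    refine eq_zero_of_apply_self _ ?_
    have := h (0, p.2 - q.2)
    simp only [cxForm, map_zero, map_sub] at this
    simp only [map_sub, LinearMap.sub_apply]
    linarith
  exact Prod.ext (sub_eq_zero.mp h₁) (sub_eq_zero.mp h₂)

end Complexification

theorem stmt_6 {V : Type*} [AddCommGroup V] [Module ℝ V]
    {n : ℕ} (b : Module.Basis (Fin n) ℝ V)
    (B : LinearMap.BilinForm ℝ V)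
    (hBpos : ∀ x, x ≠ 0 → 0 < B x x)
    (A : V →ₗ[ℝ] V →ₗ[ℝ] V →ₗ[ℝ] V →ₗ[ℝ] ℝ)
    (s : ℝ) (hEinstein : ∀ x y, (∑ k, A x (b k) (b k) y) = s * B x y)
    (rho1 : (V × V) →ₗ[ℝ] (V × V))
    (hrho1 : ∀ u v, cxForm B (rho1 u) v = cxRicci b A u v) :
    (∀ e : V, rho1 (e, 0) = (0, -((2 * s) • e))) ∧
    (∀ e : V, rho1 (0, e) = ((2 * s) • e, 0)) ∧
    (∀ u : V × V, rho1 (rho1 u) = -((4 * s ^ 2) • u)) := by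
  have h_real : ∀ e : V, rho1 (e, 0) = (0, -((2 * s) • e)) := fun e =>
    eq_of_forall_cxForm_eq hBpos fun v => by
      rw [hrho1, cxRicci_inl, hEinstein]
      simp only [cxForm, map_zero, map_neg, map_smul, LinearMap.zero_apply,
        LinearMap.neg_apply, LinearMap.smul_apply, smul_eq_mul]
      ring
  have h_imag : ∀ e : V, rho1 (0, e) = ((2 * s) • e, 0) := fun e =>
    eq_of_forall_cxForm_eq hBpos fun v => by
      rw [hrho1, cxRicci_inr, hEinstein]
      simp only [cxForm, map_zero, map_smul, LinearMap.zero_apply,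
        LinearMap.smul_apply, smul_eq_mul]
      ring
  refine ⟨h_real, h_imag, fun u => ?_⟩
  have hu : u = (u.1, 0) + (0, u.2) := by simp
  rw [hu, map_add, h_real, h_imag, map_add, h_imag, h_real]
  ext <;> simp only [Prod.fst_add, Prod.snd_add, Prod.fst_neg, Prod.snd_neg, Prod.smul_fst,
    Prod.smul_snd] <;> module
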